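/- Let M be an oriented odd-dimensional Riemannian manifold of dimension 2n+1 with volume form μ, and let X be a nowhere vanishing vector field with dual 1-form α = g(X,-) satisfying the rotational Beltrami condition curl(X) = fX with f > 0 everywhere (i.e., (dα)ⁿ = f ι_X μ). Then α is a contact form: α ∧ (dα)ⁿ is nowhere vanishing. Moreover ι_X dα = 0, so X is a Reeb-like vector field for α. -/

import Mathlib

/-!
Since `α ∧ μ = 0` in top degree, contracting with `X` gives `α ∧ ι_X μ = α(X) μ = ‖X‖² μ`, so
`α ∧ βⁿ = f ‖X‖² μ ≠ 0`. For the Reeb property: the coefficient matrix of the 2-form `β` is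
skew of odd size, hence singular, so `ι_R β = 0` for some `R ≠ 0`, and then `ι_R βⁿ = 0`; also
`ι_X βⁿ = f ι_X ι_X μ = 0`. Contracting `α ∧ βⁿ = c μ` with any `Y` such that `ι_Y βⁿ = 0` gives
`α(Y) βⁿ = c ι_Y μ`, and `Y ↦ ι_Y μ` is injective, so these `Y` form a line. Hence `X` is a
multiple of `R` and `ι_X β = 0`.
-/

open ExteriorAlgebra CliffordAlgebra Module
open scoped RealInnerProductSpace

local infixl:70 " ⌋ " => contractLeft (Q := 0)

theorem Matrix.det_eq_zero_of_transpose_eq_neg {K ι : Type*} [Field K] [NeZero (2 : K)]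
    [Fintype ι] [DecidableEq ι] (hι : Odd (Fintype.card ι)) {A : Matrix ι ι K}
    (hA : A.transpose = -A) : A.det = 0 := by
  have h := A.det_transpose
  rw [hA, det_neg, hι.neg_one_pow, neg_one_mul, neg_eq_iff_add_eq_zero, ← two_mul] at h
  exact (mul_eq_zero.mp h).resolve_left two_ne_zero

namespace ExteriorAlgebra

variable {K M : Type*} [Field K] [AddCommGroup M] [Module K M]

theorem eq_zero_of_mem_exteriorPower_of_finrank_lt [FiniteDimensional K M]
    {k : ℕ} (hk : finrank K M < k) {x : ExteriorAlgebra K M} (hx : x ∈ ⋀[K]^k M) : x = 0 := by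
  have : Subsingleton (⋀[K]^k M) := Module.finrank_zero_iff.mp <| by
    rw [exteriorPower.finrank_eq, Nat.choose_eq_zero_of_lt hk]
  exact congrArg Subtype.val (Subsingleton.elim (⟨x, hx⟩ : ⋀[K]^k M) 0)

theorem ι_mul_eq_zero_of_mem_top [FiniteDimensional K M] (v : M)
    {μ : ExteriorAlgebra K M} (hμ : μ ∈ ⋀[K]^(finrank K M) M) : ι K v * μ = 0 :=
  eq_zero_of_mem_exteriorPower_of_finrank_lt (Nat.lt_one_add_iff.mpr le_rfl)
    (SetLike.mul_mem_graded (by simp only [pow_one]; exact LinearMap.mem_range_self (ι K) v) hμ)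

theorem ι_mul_contractLeft_of_mem_top [FiniteDimensional K M] (v : M) (d : Dual K M)
    {μ : ExteriorAlgebra K M} (hμ : μ ∈ ⋀[K]^(finrank K M) M) :
    ι K v * (d ⌋ μ) = d v • μ := by
  have h := congrArg (d ⌋ ·) (ι_mul_eq_zero_of_mem_top v hμ)
  simp only [contractLeft_ι_mul, map_zero, sub_eq_zero] at h
  exact h.symm

theorem contractLeft_ne_zero_of_mem_top [FiniteDimensional K M] {d : Dual K M} (hd : d ≠ 0)
    {μ : ExteriorAlgebra K M} (hμ : μ ∈ ⋀[K]^(finrank K M) M) (hμ0 : μ ≠ 0) :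
    d ⌋ μ ≠ 0 := by
  obtain ⟨v, hv⟩ : ∃ v, d v = 1 := by
    obtain ⟨w, hw⟩ := DFunLike.ne_iff.mp hd
    exact ⟨(d w)⁻¹ • w, by simp [inv_mul_cancel₀ hw]⟩
  intro h
  have := ι_mul_contractLeft_of_mem_top v d hμ
  rw [h, hv, mul_zero, one_smul] at this
  exact hμ0 this.symm

theorem contractLeft_mul_of_mem_two (d : Dual K M) {β : ExteriorAlgebra K M}
    (hβ : β ∈ ⋀[K]^2 M) (z : ExteriorAlgebra K M) :
    d ⌋ (β * z) = (d ⌋ β) * z + β * (d ⌋ z) := by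
  rw [exteriorPower, sq] at hβ
  refine Submodule.mul_induction_on hβ ?_ ?_
  · rintro _ ⟨x, rfl⟩ _ ⟨y, rfl⟩
    simp only [mul_assoc, contractLeft_ι_mul, contractLeft_ι, Algebra.algebraMap_eq_smul_one,
      smul_mul_assoc, mul_smul_comm, mul_one, sub_mul, mul_sub]
    abel
  · intro x y hx hy
    simp only [add_mul, map_add, hx, hy]
    abel

theorem exists_contractLeft_eq_ι_of_mem_two (d : Dual K M) {β : ExteriorAlgebra K M}
    (hβ : β ∈ ⋀[K]^2 M) : ∃ w : M, d ⌋ β = ι K w := by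
  rw [exteriorPower, sq] at hβ
  refine Submodule.mul_induction_on hβ ?_ ?_
  · rintro _ ⟨x, rfl⟩ _ ⟨y, rfl⟩
    refine ⟨d x • y - d y • x, ?_⟩
    rw [contractLeft_ι_mul, contractLeft_ι, Algebra.algebraMap_eq_smul_one, mul_smul_comm,
      mul_one, map_sub, map_smul, map_smul]
  · rintro x y ⟨w₁, h₁⟩ ⟨w₂, h₂⟩
    exact ⟨w₁ + w₂, by rw [map_add, h₁, h₂, map_add]⟩

theorem contractLeft_pow_eq_zero_of_mem_two {d : Dual K M} {β : ExteriorAlgebra K M}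
    (hβ : β ∈ ⋀[K]^2 M) (h : d ⌋ β = 0) (m : ℕ) : d ⌋ β ^ m = 0 := by
  induction m with
  | zero => rw [pow_zero]; exact contractLeft_one (Q := (0 : QuadraticForm K M)) (d := d)
  | succ k ih =>
    rw [pow_succ', contractLeft_mul_of_mem_two d hβ, h, ih, zero_mul, mul_zero, add_zero]

theorem exists_ne_zero_contractLeft_eq_zero_of_mem_two [NeZero (2 : K)] [FiniteDimensional K M]
    (hodd : Odd (finrank K M)) {β : ExteriorAlgebra K M} (hβ : β ∈ ⋀[K]^2 M) :
    ∃ d : Dual K M, d ≠ 0 ∧ d ⌋ β = 0 := by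
  classical
  let b := finBasis K M
  let e := b.dualBasis
  let A : Matrix (Fin (finrank K M)) (Fin (finrank K M)) K :=
    Matrix.of fun i j => algebraMapInv (e i ⌋ (e j ⌋ β))
  have hA : A.transpose = -A := by
    ext i j
    simp only [A, Matrix.transpose_apply, Matrix.of_apply, Matrix.neg_apply,
      contractLeft_comm (e j), map_neg]
  obtain ⟨c, hc0, hAc⟩ := Matrix.exists_mulVec_eq_zero_iff.mpr
    (A.det_eq_zero_of_transpose_eq_neg (by simpa using hodd) hA)
  refine ⟨∑ j, c j • e j,
    fun h => hc0 (funext (Fintype.linearIndependent_iff.mp e.linearIndependent c h)), ?_⟩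
  obtain ⟨w, hw⟩ := exists_contractLeft_eq_ι_of_mem_two (∑ j, c j • e j) hβ
  suffices w = 0 by rw [hw, this, map_zero]
  refine b.forall_coord_eq_zero_iff.mp fun i => ?_
  have h := congrArg (fun x => algebraMapInv (e i ⌋ x)) hw
  simp only [contractLeft_ι, algebraMap_leftInverse _ _, map_sum, map_smul, LinearMap.sum_apply,
    LinearMap.smul_apply] at h
  rw [← b.coe_dualBasis, ← h]
  simpa only [A, Matrix.mulVec, dotProduct, Matrix.of_apply, smul_eq_mul, mul_comm,
    Pi.zero_apply] using congrFun hAc i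

theorem contractLeft_eq_zero_of_ι_mul_pow_eq_smul [NeZero (2 : K)] [FiniteDimensional K M]
    (hodd : Odd (finrank K M)) {μ β : ExteriorAlgebra K M} (hμ : μ ∈ ⋀[K]^(finrank K M) M)
    (hμ0 : μ ≠ 0) (hβ : β ∈ ⋀[K]^2 M) {n : ℕ} {a : M} {c : K} (hc : c ≠ 0)
    (hτ : ι K a * β ^ n = c • μ) {d : Dual K M} (hd : d ⌋ β ^ n = 0) : d ⌋ β = 0 := by
  have key (d' : Dual K M) (hd' : d' ⌋ β ^ n = 0) : d' a • β ^ n = c • (d' ⌋ μ) := by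
    simpa only [contractLeft_ι_mul, hd', mul_zero, sub_zero, map_smul] using
      congrArg (d' ⌋ ·) hτ
  have contractLeft_μ_ne_zero {d' : Dual K M} (h : d' ≠ 0) : c • (d' ⌋ μ) ≠ 0 :=
    smul_ne_zero hc (contractLeft_ne_zero_of_mem_top h hμ hμ0)
  obtain ⟨r, hr0, hr⟩ := exists_ne_zero_contractLeft_eq_zero_of_mem_two hodd hβ
  have hrn := contractLeft_pow_eq_zero_of_mem_two hβ hr n
  have hra : r a ≠ 0 := fun h => contractLeft_μ_ne_zero hr0 (by rw [← key r hrn, h, zero_smul])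
  have hdr : d = (d a / r a) • r := by
    by_contra hne
    refine contractLeft_μ_ne_zero (sub_ne_zero.mpr hne) ?_
    rw [← key _ (by simp only [map_sub, map_smul, LinearMap.sub_apply, LinearMap.smul_apply, hd,
      hrn, smul_zero, sub_zero])]
    simp only [LinearMap.sub_apply, LinearMap.smul_apply, smul_eq_mul, div_mul_cancel₀ _ hra,
      sub_self, zero_smul]
  rw [hdr, map_smul, LinearMap.smul_apply, hr, smul_zero]

end ExteriorAlgebra

theorem stmt_6_general (n : ℕ)
    (X : EuclideanSpace ℝ (Fin (2*n+1))) (hX : X ≠ 0)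
    (μ β : ExteriorAlgebra ℝ (Module.Dual ℝ (EuclideanSpace ℝ (Fin (2*n+1)))))
    (hμ : μ ∈ ⋀[ℝ]^(2*n+1) (Module.Dual ℝ (EuclideanSpace ℝ (Fin (2*n+1)))))
    (hμ0 : μ ≠ 0)
    (hβ : β ∈ ⋀[ℝ]^2 (Module.Dual ℝ (EuclideanSpace ℝ (Fin (2*n+1)))))
    (f : ℝ) (hf : 0 < f)
    (hBeltrami : β ^ n
      = f • CliffordAlgebra.contractLeft
          (Q := (0 : QuadraticForm ℝ (Module.Dual ℝ (EuclideanSpace ℝ (Fin (2*n+1))))))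
          (Module.Dual.eval ℝ (EuclideanSpace ℝ (Fin (2*n+1))) X) μ) :
    ExteriorAlgebra.ι ℝ ((innerSL ℝ X).toLinearMap) * β ^ n ≠ 0
    ∧ CliffordAlgebra.contractLeft
        (Q := (0 : QuadraticForm ℝ (Module.Dual ℝ (EuclideanSpace ℝ (Fin (2*n+1))))))
        (Module.Dual.eval ℝ (EuclideanSpace ℝ (Fin (2*n+1))) X) β = 0 := by
  have hdim : finrank ℝ (Dual ℝ (EuclideanSpace ℝ (Fin (2*n+1)))) = 2*n+1 := by
    rw [Subspace.dual_finrank_eq, finrank_euclideanSpace_fin]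
  replace hμ : μ ∈ ⋀[ℝ]^(finrank ℝ (Dual ℝ (EuclideanSpace ℝ (Fin (2*n+1)))))  _ := by
    rwa [hdim]
  have hc : f * ⟪X, X⟫ ≠ 0 := mul_ne_zero hf.ne' (inner_self_ne_zero.mpr hX)
  have hcontact : ι ℝ (innerSL ℝ X).toLinearMap * β ^ n = (f * ⟪X, X⟫) • μ := by
    rw [hBeltrami, mul_smul_comm, ι_mul_contractLeft_of_mem_top _ _ hμ, smul_smul]
    rfl
  refine ⟨hcontact ▸ smul_ne_zero hc hμ0,
    contractLeft_eq_zero_of_ι_mul_pow_eq_smul (by rw [hdim]; exact odd_two_mul_add_one n)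
      hμ hμ0 hβ hc hcontact ?_⟩
  rw [hBeltrami, map_smul, contractLeft_contractLeft, smul_zero]

/-- Pointwise content of the contact mirror (Beltrami ⇒ contact), in a (2n+1)-dimensional
oriented Euclidean space `V`: forms are represented as elements of the exterior algebra of
the dual space `V*`, wedge product is the algebra product, and the interior product `ι_X`
is left contraction against the evaluation functional of `X`. If `X ≠ 0`, `μ` is a nonzero
volume (top-degree) form, `α = ⟨X, -⟩` is the dual 1-form, and the 2-form `β` (playing the
role of `dα`) satisfies the rotational Beltrami condition `βⁿ = f · ι_X μ` with `f > 0`,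
then `α ∧ βⁿ ≠ 0` (the contact condition) and `ι_X β = 0` (`X` is Reeb-like). -/
theorem stmt_6 (n : ℕ) (hn : 0 < n)
    (X : EuclideanSpace ℝ (Fin (2*n+1))) (hX : X ≠ 0)
    (μ β : ExteriorAlgebra ℝ (Module.Dual ℝ (EuclideanSpace ℝ (Fin (2*n+1)))))
    (hμ : μ ∈ ⋀[ℝ]^(2*n+1) (Module.Dual ℝ (EuclideanSpace ℝ (Fin (2*n+1)))))
    (hμ0 : μ ≠ 0)
    (hβ : β ∈ ⋀[ℝ]^2 (Module.Dual ℝ (EuclideanSpace ℝ (Fin (2*n+1)))))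
    (f : ℝ) (hf : 0 < f)
    (hBeltrami : β ^ n
      = f • CliffordAlgebra.contractLeft
          (Q := (0 : QuadraticForm ℝ (Module.Dual ℝ (EuclideanSpace ℝ (Fin (2*n+1))))))
          (Module.Dual.eval ℝ (EuclideanSpace ℝ (Fin (2*n+1))) X) μ) :
    ExteriorAlgebra.ι ℝ ((innerSL ℝ X).toLinearMap) * β ^ n ≠ 0
    ∧ CliffordAlgebra.contractLeft
        (Q := (0 : QuadraticForm ℝ (Module.Dual ℝ (EuclideanSpace ℝ (Fin (2*n+1))))))
        (Module.Dual.eval ℝ (EuclideanSpace ℝ (Fin (2*n+1))) X) β = 0 :=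
  stmt_6_general n X hX μ β hμ hμ0 hβ f hf hBeltrami
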